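/- Let ε ∈ (1/2, 1) and define φ : [0,1] → ℝ by φ(t) = −ε·log((2ε−1)/(4εt)) − 1 + ε for t ∈ [0, (2ε−1)/(4ε)], φ(t) = −1 + ε for t ∈ [(2ε−1)/(4ε), 1/2], φ(t) = 1 − ε for t ∈ (1/2, (2ε+1)/(4ε)], and φ(t) = ε·log((2ε−1)/(4ε(1−t))) + 1 − ε for t ∈ [(2ε+1)/(4ε), 1]. Then φ ∈ BMO_ε([0,1]), ⟨φ⟩_{[0,1]} = 0, ⟨φ²⟩_{[0,1]} = ε², and ⟨e^{|φ|}⟩_{[0,1]} = e^{1−ε}/(2 − 2ε). -/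

import Mathlib

/-!
On `[0, 1/2]` the optimizer `φ` is `g ∘ log`, where `g x = min (ε (x - log a)) 0 - (1 - ε)` is
`ε`-Lipschitz and `a = (2ε - 1)/(4ε)`; away from `t = 1/2` it satisfies `φ (1 - t) = -φ t`.
Composing with a `K`-Lipschitz map multiplies the mean square oscillation by at most `K²`, and
the mean square oscillation of `log` on `[c, d] ⊆ [0, ∞)` equals
`1 - c d (log d - log c)² / (d - c)² ≤ 1`. By the symmetry this covers subintervals of either
half. For a subinterval straddling `1/2` the oscillation is at most the second moment, and
`∫_c^{1/2} φ² ≤ ε² (1/2 - c)` because the left side is `ε² (1/2 - c) - c (ε log (c/a) - 1)²` for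
`c ≤ a` and `(1 - ε)² (1/2 - c)` for `c ≥ a`. The three moments are explicit integrals of `log`,
`log²` and `t^(-ε)`.
-/

open MeasureTheory Real

/-- The average of `φ` over the interval `[a, b]`. -/
noncomputable def intervalAvg (a b : ℝ) (φ : ℝ → ℝ) : ℝ :=
  (b - a)⁻¹ * ∫ t in a..b, φ t

/-- `φ` belongs to the `ε`-ball of `BMO([a,b])` (with the `L²`-based seminorm):
`φ` is in `L²([a,b])` and the mean square oscillation over every subinterval is at most `ε²`. -/
def MemBMO (ε a b : ℝ) (φ : ℝ → ℝ) : Prop :=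
  MeasureTheory.IntegrableOn φ (Set.Icc a b) ∧
  MeasureTheory.IntegrableOn (fun t => (φ t) ^ 2) (Set.Icc a b) ∧
  ∀ c d : ℝ, a ≤ c → c < d → d ≤ b →
    intervalAvg c d (fun t => (φ t - intervalAvg c d φ) ^ 2) ≤ ε ^ 2

/-- The Bellman function `𝔹_ε(x₁, x₂)` for the symmetric integral John–Nirenberg inequality. -/
noncomputable def bellman (ε x₁ x₂ : ℝ) : ℝ :=
  sSup { y : ℝ | ∃ φ : ℝ → ℝ, MemBMO ε 0 1 φ ∧
    intervalAvg 0 1 φ = x₁ ∧ intervalAvg 0 1 (fun t => (φ t) ^ 2) = x₂ ∧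
    y = intervalAvg 0 1 (fun t => Real.exp |φ t|) }

open Set intervalIntegral
open scoped Interval

noncomputable def meanSqOsc (c d : ℝ) (f : ℝ → ℝ) : ℝ :=
  intervalAvg c d (fun t => (f t - intervalAvg c d f) ^ 2)

section Averages

variable {c d : ℝ} {f g : ℝ → ℝ}

lemma intervalAvg_congr_ae (h : ∀ᵐ t, t ∈ Ι c d → f t = g t) :
    intervalAvg c d f = intervalAvg c d g := by
  rw [intervalAvg, intervalAvg, integral_congr_ae h]

lemma meanSqOsc_congr_ae (h : ∀ᵐ t, t ∈ Ι c d → f t = g t) :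
    meanSqOsc c d f = meanSqOsc c d g := by
  rw [meanSqOsc, meanSqOsc, intervalAvg_congr_ae h]
  refine intervalAvg_congr_ae (h.mono fun t ht hmem => ?_)
  rw [ht hmem]

lemma meanSqOsc_neg : meanSqOsc c d (fun t => -f t) = meanSqOsc c d f := by
  have h : intervalAvg c d (fun t => -f t) = -intervalAvg c d f := by
    rw [intervalAvg, intervalAvg, intervalIntegral.integral_neg, mul_neg]
  rw [meanSqOsc, meanSqOsc, h]
  congr 1
  funext t
  ring

lemma intervalAvg_comp_sub_left (k : ℝ) :
    intervalAvg c d (fun t => f (k - t)) = intervalAvg (k - d) (k - c) f := by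
  rw [intervalAvg, intervalAvg, integral_comp_sub_left, sub_sub_sub_cancel_left]

lemma meanSqOsc_comp_sub_left (k : ℝ) :
    meanSqOsc c d (fun t => f (k - t)) = meanSqOsc (k - d) (k - c) f := by
  rw [meanSqOsc, intervalAvg_comp_sub_left,
    intervalAvg_comp_sub_left (f := fun t => (f t - intervalAvg (k - d) (k - c) f) ^ 2)]
  rfl

lemma intervalAvg_mono (hcd : c ≤ d) (hf : IntervalIntegrable f volume c d)
    (hg : IntervalIntegrable g volume c d) (h : ∀ t ∈ Icc c d, f t ≤ g t) :
    intervalAvg c d f ≤ intervalAvg c d g :=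
  mul_le_mul_of_nonneg_left (integral_mono_on hcd hf hg h) (inv_nonneg.2 (sub_nonneg.2 hcd))

lemma intervalIntegrable_sub_sq (hf : IntervalIntegrable f volume c d)
    (hf2 : IntervalIntegrable (fun t => f t ^ 2) volume c d) (m : ℝ) :
    IntervalIntegrable (fun t => (f t - m) ^ 2) volume c d := by
  have h := (hf2.sub (hf.const_mul (2 * m))).add (intervalIntegrable_const (c := m ^ 2))
  exact h.congr fun t _ => by ring

lemma intervalAvg_sub_sq (hcd : c ≠ d) (hf : IntervalIntegrable f volume c d)
    (hf2 : IntervalIntegrable (fun t => f t ^ 2) volume c d) (m : ℝ) :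
    intervalAvg c d (fun t => (f t - m) ^ 2) = meanSqOsc c d f + (intervalAvg c d f - m) ^ 2 := by
  have hdc : d - c ≠ 0 := sub_ne_zero.2 hcd.symm
  have expand : ∀ x : ℝ, ∫ t in c..d, (f t - x) ^ 2
      = (∫ t in c..d, f t ^ 2) - 2 * x * (∫ t in c..d, f t) + (d - c) * x ^ 2 := by
    intro x
    have h : (fun t => (f t - x) ^ 2) = fun t => (f t ^ 2 - 2 * x * f t) + x ^ 2 := by
      funext t; ring
    rw [h, integral_add (hf2.sub (hf.const_mul _)) intervalIntegrable_const,
      integral_sub hf2 (hf.const_mul _), intervalIntegral.integral_const_mul,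
      intervalIntegral.integral_const, smul_eq_mul]
  rw [meanSqOsc, intervalAvg, intervalAvg, expand, expand, intervalAvg]
  field_simp
  ring

lemma meanSqOsc_le_intervalAvg_sub_sq (hcd : c ≠ d) (hf : IntervalIntegrable f volume c d)
    (hf2 : IntervalIntegrable (fun t => f t ^ 2) volume c d) (m : ℝ) :
    meanSqOsc c d f ≤ intervalAvg c d (fun t => (f t - m) ^ 2) := by
  rw [intervalAvg_sub_sq hcd hf hf2]
  exact le_add_of_nonneg_right (sq_nonneg _)

lemma meanSqOsc_comp_le {K : NNReal} (hg : LipschitzWith K g) (hcd : c < d)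
    (hf : IntervalIntegrable f volume c d)
    (hf2 : IntervalIntegrable (fun t => f t ^ 2) volume c d)
    (hgf : IntervalIntegrable (fun t => g (f t)) volume c d)
    (hgf2 : IntervalIntegrable (fun t => g (f t) ^ 2) volume c d) :
    meanSqOsc c d (fun t => g (f t)) ≤ K ^ 2 * meanSqOsc c d f := by
  set m := intervalAvg c d f
  calc meanSqOsc c d (fun t => g (f t))
      ≤ intervalAvg c d (fun t => (g (f t) - g m) ^ 2) :=
        meanSqOsc_le_intervalAvg_sub_sq hcd.ne hgf hgf2 _
    _ ≤ intervalAvg c d (fun t => K ^ 2 * (f t - m) ^ 2) := by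
        refine intervalAvg_mono hcd.le (intervalIntegrable_sub_sq hgf hgf2 _)
          ((intervalIntegrable_sub_sq hf hf2 m).const_mul _) fun t _ => ?_
        have h := hg.dist_le_mul (f t) m
        rw [Real.dist_eq, Real.dist_eq] at h
        rw [← sq_abs (g _ - _), ← sq_abs (f t - m), ← mul_pow]
        exact pow_le_pow_left₀ (abs_nonneg _) h 2
    _ = K ^ 2 * meanSqOsc c d f := by
        rw [meanSqOsc, intervalAvg, intervalAvg, intervalIntegral.integral_const_mul]
        ring

end Averages

lemma lipschitzWith_min_mul_sub_const {κ : ℝ} (hκ : 0 ≤ κ) (b c : ℝ) :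
    LipschitzWith κ.toNNReal (fun x => min (κ * (x - b)) 0 - c) := by
  refine LipschitzWith.of_dist_le_mul fun x y => ?_
  rw [Real.dist_eq, Real.dist_eq, Real.coe_toNNReal _ hκ, sub_sub_sub_cancel_right]
  calc |min (κ * (x - b)) 0 - min (κ * (y - b)) 0|
      ≤ max |κ * (x - b) - κ * (y - b)| |0 - 0| := abs_min_sub_min_le_max _ _ _ _
    _ = κ * |x - y| := by
        rw [sub_self, abs_zero, max_eq_left (abs_nonneg _), ← mul_sub, sub_sub_sub_cancel_right,
          abs_mul, abs_of_nonneg hκ]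

section Log

variable {a b : ℝ}

lemma continuousOn_mul_mul_log_add_sq (α γ : ℝ) :
    ContinuousOn (fun t => t * (α * log t + γ) ^ 2) (Ici 0) := by
  -- on `t ≥ 0` the function is `(2α √t log √t + γ √t)²`, and `x log x` is continuous
  have hcont : Continuous fun t => (2 * α * (√t * log √t) + γ * √t) ^ 2 := by
    have := Real.continuous_mul_log.comp Real.continuous_sqrt
    fun_prop
  refine hcont.continuousOn.congr fun t (ht : 0 ≤ t) => ?_
  beta_reduce
  rw [Real.log_sqrt ht]
  linear_combination (-(α * log t + γ) ^ 2) * Real.sq_sqrt ht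

lemma hasDerivAt_primitive_mul_log_add_sq (α β : ℝ) {t : ℝ} (ht : t ≠ 0) :
    HasDerivAt (fun t => t * ((α * log t + β - α) ^ 2 + α ^ 2)) ((α * log t + β) ^ 2) t := by
  have h := (hasDerivAt_id t).mul
    (((((Real.hasDerivAt_log ht).const_mul α).add_const β).sub_const α).pow 2 |>.add_const (α ^ 2))
  refine h.congr_deriv ?_
  simp only [id, Pi.pow_apply]
  field_simp
  ring

lemma continuousOn_primitive_mul_log_add_sq (α β : ℝ) :
    ContinuousOn (fun t => t * ((α * log t + β - α) ^ 2 + α ^ 2)) (Ici 0) := by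
  refine ((continuousOn_mul_mul_log_add_sq α (β - α)).add
    (continuousOn_id.mul (continuousOn_const (c := α ^ 2)))).congr fun t _ => ?_
  simp only [Pi.add_apply, Pi.mul_apply, id]
  ring

lemma intervalIntegrable_mul_log_add_sq (α β : ℝ) (ha : 0 ≤ a) (hb : 0 ≤ b) :
    IntervalIntegrable (fun t => (α * log t + β) ^ 2) volume a b :=
  intervalIntegrable_deriv_of_nonneg
    ((continuousOn_primitive_mul_log_add_sq α β).mono fun _ ht => le_trans (le_min ha hb) ht.1)
    (fun _ ht => hasDerivAt_primitive_mul_log_add_sq α β (lt_of_le_of_lt (le_min ha hb) ht.1).ne')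
    (fun _ _ => sq_nonneg _)

lemma integral_mul_log_add_sq (α β : ℝ) (ha : 0 ≤ a) (hb : 0 ≤ b) :
    ∫ t in a..b, (α * log t + β) ^ 2 =
      b * ((α * log b + β - α) ^ 2 + α ^ 2) - a * ((α * log a + β - α) ^ 2 + α ^ 2) :=
  integral_eq_sub_of_hasDeriv_right
    ((continuousOn_primitive_mul_log_add_sq α β).mono fun _ ht => le_trans (le_min ha hb) ht.1)
    (fun _ ht => (hasDerivAt_primitive_mul_log_add_sq α β
      (lt_of_le_of_lt (le_min ha hb) ht.1).ne').hasDerivWithinAt)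
    (intervalIntegrable_mul_log_add_sq α β ha hb)

lemma intervalIntegrable_log_sq (ha : 0 ≤ a) (hb : 0 ≤ b) :
    IntervalIntegrable (fun t => log t ^ 2) volume a b := by
  simpa using intervalIntegrable_mul_log_add_sq 1 0 ha hb

lemma meanSqOsc_log_le_one {c d : ℝ} (hc : 0 ≤ c) (hcd : c < d) : meanSqOsc c d log ≤ 1 := by
  have hd : 0 ≤ d := hc.trans hcd.le
  have hdc : 0 < d - c := sub_pos.2 hcd
  have hsq : ∫ t in c..d, log t ^ 2 =
      d * ((log d - 1) ^ 2 + 1) - c * ((log c - 1) ^ 2 + 1) := by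
    simpa using integral_mul_log_add_sq 1 0 hc hd
  have hvar : (d - c) * (∫ t in c..d, log t ^ 2) - (∫ t in c..d, log t) ^ 2 =
      (d - c) ^ 2 - c * d * (log d - log c) ^ 2 := by
    rw [hsq, integral_log]
    ring
  have h := intervalAvg_sub_sq hcd.ne intervalIntegrable_log' (intervalIntegrable_log_sq hc hd) 0
  simp only [sub_zero] at h
  have hosc : meanSqOsc c d log =
      ((d - c) * (∫ t in c..d, log t ^ 2) - (∫ t in c..d, log t) ^ 2) / (d - c) ^ 2 := by
    rw [eq_sub_of_add_eq h.symm, intervalAvg, intervalAvg]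
    field_simp
  rw [hosc, hvar, div_le_one (by positivity)]
  nlinarith [show 0 ≤ c * d * (log d - log c) ^ 2 by positivity]

end Log

noncomputable def breakpoint (ε : ℝ) : ℝ := (2 * ε - 1) / (4 * ε)

noncomputable def optimizer (ε t : ℝ) : ℝ :=
  if t ≤ (2 * ε - 1) / (4 * ε) then
    -ε * Real.log ((2 * ε - 1) / (4 * ε * t)) - 1 + ε
  else if t ≤ 1 / 2 then -1 + ε
  else if t ≤ (2 * ε + 1) / (4 * ε) then 1 - ε
  else ε * Real.log ((2 * ε - 1) / (4 * ε * (1 - t))) + 1 - ε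

section Optimizer

variable {ε : ℝ}

lemma breakpoint_pos (hε : 1 / 2 < ε) : 0 < breakpoint ε :=
  div_pos (by linarith) (by linarith)

lemma breakpoint_lt_half (hε : 1 / 2 < ε) : breakpoint ε < 1 / 2 := by
  rw [breakpoint, div_lt_iff₀ (by linarith)]
  linarith

lemma one_sub_breakpoint (hε : ε ≠ 0) : 1 - breakpoint ε = (2 * ε + 1) / (4 * ε) := by
  rw [breakpoint]
  field_simp
  ring

lemma four_mul_mul_breakpoint (hε : ε ≠ 0) : 4 * ε * breakpoint ε = 2 * ε - 1 := by
  rw [breakpoint]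
  field_simp

lemma optimizer_eq_min (hε : 1 / 2 < ε) {t : ℝ} (ht : t ∈ Icc 0 (1 / 2)) :
    optimizer ε t = min (ε * (log t - log (breakpoint ε))) 0 - (1 - ε) := by
  have ha := breakpoint_pos hε
  have hlog_a : log (breakpoint ε) < 0 :=
    log_neg ha (by linarith [breakpoint_lt_half hε])
  rw [optimizer, ← breakpoint]
  by_cases hta : t ≤ breakpoint ε
  · rw [if_pos hta]
    rcases ht.1.eq_or_lt with rfl | htpos
    · rw [mul_zero, div_zero, log_zero, min_eq_right (by nlinarith)]
      ring
    · rw [min_eq_left (mul_nonpos_of_nonneg_of_nonpos (by linarith)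
          (sub_nonpos.2 (log_le_log htpos hta))), ← div_div, ← breakpoint,
        log_div ha.ne' htpos.ne']
      ring
  · rw [if_neg hta, if_pos ht.2, min_eq_right (mul_nonneg (by linarith)
        (sub_nonneg.2 (log_le_log ha (not_le.1 hta).le)))]
    ring

lemma optimizer_of_mem_Ioc (hε : 1 / 2 < ε) {t : ℝ} (ht : t ∈ Ioc 0 (breakpoint ε)) :
    optimizer ε t = ε * (log t - log (breakpoint ε)) - (1 - ε) := by
  rw [optimizer_eq_min hε ⟨ht.1.le, ht.2.trans (breakpoint_lt_half hε).le⟩,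
    min_eq_left (mul_nonpos_of_nonneg_of_nonpos (by linarith)
      (sub_nonpos.2 (log_le_log ht.1 ht.2)))]

lemma optimizer_of_mem_Icc (hε : 1 / 2 < ε) {t : ℝ} (ht : t ∈ Icc (breakpoint ε) (1 / 2)) :
    optimizer ε t = -(1 - ε) := by
  rw [optimizer_eq_min hε ⟨(breakpoint_pos hε).le.trans ht.1, ht.2⟩,
    min_eq_right (mul_nonneg (by linarith) (sub_nonneg.2 (log_le_log (breakpoint_pos hε) ht.1)))]
  ring

lemma optimizer_one_sub_of_lt (hε : 1 / 2 < ε) {s : ℝ} (hs : s < 1 / 2) :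
    optimizer ε (1 - s) = -optimizer ε s := by
  have hab := one_sub_breakpoint (by linarith : ε ≠ 0)
  have h1 : ¬ 1 - s ≤ breakpoint ε := by linarith [breakpoint_lt_half hε]
  have h2 : ¬ 1 - s ≤ 1 / 2 := by linarith
  by_cases hsa : s < breakpoint ε
  · have h3 : ¬ 1 - s ≤ (2 * ε + 1) / (4 * ε) := by linarith
    rw [optimizer, optimizer, ← breakpoint, if_neg h1, if_neg h2, if_neg h3,
      if_pos hsa.le, sub_sub_cancel]
    ring
  · have h3 : 1 - s ≤ (2 * ε + 1) / (4 * ε) := by linarith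
    rw [optimizer_of_mem_Icc hε ⟨not_lt.1 hsa, hs.le⟩, optimizer, ← breakpoint,
      if_neg h1, if_neg h2, if_pos h3]
    ring

lemma optimizer_one_sub (hε : 1 / 2 < ε) {s : ℝ} (hs : s ≠ 1 / 2) :
    optimizer ε (1 - s) = -optimizer ε s := by
  rcases hs.lt_or_gt with hs | hs
  · exact optimizer_one_sub_of_lt hε hs
  · have h := optimizer_one_sub_of_lt hε (s := 1 - s) (by linarith)
    rw [sub_sub_cancel] at h
    rw [h, neg_neg]

lemma intervalIntegrable_comp_optimizer_zero_half {F : ℝ → ℝ} (hε : 1 / 2 < ε)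
    (hF : IntervalIntegrable (fun t => F (optimizer ε t)) volume 0 (breakpoint ε)) :
    IntervalIntegrable (fun t => F (optimizer ε t)) volume 0 (1 / 2) := by
  refine hF.trans ((intervalIntegrable_const (c := F (-(1 - ε)))).congr fun t ht => ?_)
  rw [uIoc_of_le (breakpoint_lt_half hε).le] at ht
  rw [optimizer_of_mem_Icc hε (Ioc_subset_Icc_self ht)]

lemma intervalIntegrable_optimizer_zero_half (hε : 1 / 2 < ε) :
    IntervalIntegrable (optimizer ε) volume 0 (1 / 2) := by
  refine intervalIntegrable_comp_optimizer_zero_half (F := id) hε ?_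
  refine (((intervalIntegrable_log'.sub (intervalIntegrable_const (c := log (breakpoint ε))))
    |>.const_mul ε).sub (intervalIntegrable_const (c := 1 - ε))).congr fun t ht => ?_
  rw [uIoc_of_le (breakpoint_pos hε).le] at ht
  rw [id, optimizer_of_mem_Ioc hε ht]

lemma intervalIntegrable_optimizer_sq_zero_half (hε : 1 / 2 < ε) :
    IntervalIntegrable (fun t => optimizer ε t ^ 2) volume 0 (1 / 2) := by
  refine intervalIntegrable_comp_optimizer_zero_half (F := fun x => x ^ 2) hε
    ((intervalIntegrable_mul_log_add_sq ε (-(ε * log (breakpoint ε)) - (1 - ε)) le_rfl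
      (breakpoint_pos hε).le).congr fun t ht => ?_)
  rw [uIoc_of_le (breakpoint_pos hε).le] at ht
  rw [optimizer_of_mem_Ioc hε ht]
  ring

lemma exp_abs_optimizer_of_mem_Ioc (hε0 : 1 / 2 < ε) (hε1 : ε < 1) {t : ℝ}
    (ht : t ∈ Ioc 0 (breakpoint ε)) :
    exp |optimizer ε t| = exp (1 - ε) * breakpoint ε ^ ε * t ^ (-ε) := by
  have hlog := log_le_log ht.1 ht.2
  rw [optimizer_of_mem_Ioc hε0 ht, abs_of_nonpos (by nlinarith),
    rpow_def_of_pos (breakpoint_pos hε0), rpow_def_of_pos ht.1, ← exp_add, ← exp_add]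
  ring_nf

lemma intervalIntegrable_exp_abs_optimizer_zero_half (hε0 : 1 / 2 < ε) (hε1 : ε < 1) :
    IntervalIntegrable (fun t => exp |optimizer ε t|) volume 0 (1 / 2) := by
  refine intervalIntegrable_comp_optimizer_zero_half (F := fun x => exp |x|) hε0
    (((intervalIntegrable_rpow' (r := -ε) (by linarith)).const_mul
      (exp (1 - ε) * breakpoint ε ^ ε)).congr fun t ht => ?_)
  rw [uIoc_of_le (breakpoint_pos hε0).le] at ht
  rw [exp_abs_optimizer_of_mem_Ioc hε0 hε1 ht]

lemma integral_optimizer_sq_of_le_breakpoint (hε : 1 / 2 < ε) {c : ℝ} (hc : 0 ≤ c)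
    (hca : c ≤ breakpoint ε) :
    ∫ t in c..1 / 2, optimizer ε t ^ 2 =
      ε ^ 2 * (1 / 2 - c) - c * (ε * (log c - log (breakpoint ε)) - 1) ^ 2 := by
  set a := breakpoint ε
  have ha : 0 < a := breakpoint_pos hε
  have hah : a < 1 / 2 := breakpoint_lt_half hε
  have h4a : 4 * ε * a = 2 * ε - 1 := four_mul_mul_breakpoint (by linarith)
  have hint := intervalIntegrable_optimizer_sq_zero_half hε
  have hleft : ∫ t in c..a, optimizer ε t ^ 2 =
      ∫ t in c..a, (ε * log t + (-(ε * log a) - (1 - ε))) ^ 2 := by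
    refine integral_congr_ae (Filter.Eventually.of_forall fun t ht => ?_)
    rw [uIoc_of_le hca] at ht
    rw [optimizer_of_mem_Ioc hε ⟨hc.trans_lt ht.1, ht.2⟩]
    ring
  have hright : ∫ t in a..1 / 2, optimizer ε t ^ 2 = ∫ _ in a..1 / 2, (1 - ε) ^ 2 := by
    refine integral_congr fun t ht => ?_
    rw [uIcc_of_le hah.le] at ht
    rw [optimizer_of_mem_Icc hε ht]
    ring
  rw [← integral_add_adjacent_intervals
      (hint.mono_set (uIcc_subset_uIcc (mem_uIcc_of_le hc (hca.trans hah.le))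
        (mem_uIcc_of_le ha.le hah.le)))
      (hint.mono_set (uIcc_subset_uIcc (mem_uIcc_of_le ha.le hah.le) right_mem_uIcc)),
    hleft, hright, integral_mul_log_add_sq _ _ hc ha.le, intervalIntegral.integral_const,
    smul_eq_mul]
  linear_combination (1 / 2) * h4a

lemma integral_optimizer_sq_le (hε : 1 / 2 < ε) {c : ℝ} (hc : 0 ≤ c) (hc' : c ≤ 1 / 2) :
    ∫ t in c..1 / 2, optimizer ε t ^ 2 ≤ ε ^ 2 * (1 / 2 - c) := by
  by_cases hca : c ≤ breakpoint ε
  · rw [integral_optimizer_sq_of_le_breakpoint hε hc hca]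
    nlinarith [mul_nonneg hc (sq_nonneg (ε * (log c - log (breakpoint ε)) - 1))]
  · rw [integral_congr (g := fun _ => (1 - ε) ^ 2) fun t ht => ?_,
      intervalIntegral.integral_const, smul_eq_mul]
    · nlinarith
    rw [uIcc_of_le hc'] at ht
    rw [optimizer_of_mem_Icc hε ⟨(not_le.1 hca).le.trans ht.1, ht.2⟩]
    ring

lemma integral_optimizer_sq_zero_half (hε : 1 / 2 < ε) :
    ∫ t in 0..1 / 2, optimizer ε t ^ 2 = ε ^ 2 / 2 := by
  rw [integral_optimizer_sq_of_le_breakpoint hε le_rfl (breakpoint_pos hε).le]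
  ring

lemma integral_exp_abs_optimizer_zero_half (hε0 : 1 / 2 < ε) (hε1 : ε < 1) :
    ∫ t in 0..1 / 2, exp |optimizer ε t| = exp (1 - ε) / (4 * (1 - ε)) := by
  set a := breakpoint ε
  have ha : 0 < a := breakpoint_pos hε0
  have hah : a < 1 / 2 := breakpoint_lt_half hε0
  have h4a : 4 * ε * a = 2 * ε - 1 := four_mul_mul_breakpoint (by linarith)
  have hint := intervalIntegrable_exp_abs_optimizer_zero_half hε0 hε1
  have hleft : ∫ t in 0..a, exp |optimizer ε t| = ∫ t in 0..a, exp (1 - ε) * a ^ ε * t ^ (-ε) := by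
    refine integral_congr_ae (Filter.Eventually.of_forall fun t ht => ?_)
    rw [uIoc_of_le ha.le] at ht
    rw [exp_abs_optimizer_of_mem_Ioc hε0 hε1 ht]
  have hright : ∫ t in a..1 / 2, exp |optimizer ε t| = ∫ _ in a..1 / 2, exp (1 - ε) := by
    refine integral_congr fun t ht => ?_
    rw [uIcc_of_le hah.le] at ht
    rw [optimizer_of_mem_Icc hε0 ht, abs_neg, abs_of_pos (sub_pos.2 hε1)]
  have hpow : a ^ ε * a ^ (-ε + 1) = a := by
    rw [← rpow_add ha, add_neg_cancel_left, rpow_one]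
  rw [← integral_add_adjacent_intervals
      (hint.mono_set (uIcc_subset_uIcc left_mem_uIcc (mem_uIcc_of_le ha.le hah.le)))
      (hint.mono_set (uIcc_subset_uIcc (mem_uIcc_of_le ha.le hah.le) right_mem_uIcc)),
    hleft, hright, intervalIntegral.integral_const_mul, integral_rpow (Or.inl (by linarith)),
    zero_rpow (by linarith), intervalIntegral.integral_const, smul_eq_mul]
  rw [sub_zero, mul_assoc, ← mul_div_assoc, hpow, neg_add_eq_sub]
  have h1 : 1 - ε ≠ 0 := by linarith
  field_simp
  linear_combination 2 * h4a

lemma meanSqOsc_optimizer_left (hε : 1 / 2 < ε) {c d : ℝ} (hc : 0 ≤ c) (hcd : c < d)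
    (hd : d ≤ 1 / 2) : meanSqOsc c d (optimizer ε) ≤ ε ^ 2 := by
  set g : ℝ → ℝ := fun x => min (ε * (x - log (breakpoint ε))) 0 - (1 - ε)
  have hsub : uIcc c d ⊆ uIcc 0 (1 / 2) :=
    uIcc_subset_uIcc (mem_uIcc_of_le hc (hcd.le.trans hd)) (mem_uIcc_of_le (hc.trans hcd.le) hd)
  have heq : EqOn (optimizer ε) (fun t => g (log t)) (uIcc c d) := fun t ht =>
    optimizer_eq_min hε (by simpa [uIcc_of_le] using hsub ht)
  have hgf := ((intervalIntegrable_optimizer_zero_half hε).mono_set hsub).congr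
    (heq.mono uIoc_subset_uIcc)
  have hgf2 : IntervalIntegrable (fun t => g (log t) ^ 2) volume c d :=
    ((intervalIntegrable_optimizer_sq_zero_half hε).mono_set hsub).congr fun t ht => by
      rw [heq (uIoc_subset_uIcc ht)]
  rw [meanSqOsc_congr_ae (Filter.Eventually.of_forall fun t ht => heq (uIoc_subset_uIcc ht))]
  calc meanSqOsc c d (fun t => g (log t))
      ≤ ε.toNNReal ^ 2 * meanSqOsc c d log :=
        meanSqOsc_comp_le (lipschitzWith_min_mul_sub_const (by linarith) _ _) hcd
          intervalIntegrable_log' (intervalIntegrable_log_sq hc (hc.trans hcd.le)) hgf hgf2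
    _ ≤ ε ^ 2 * 1 := by
        rw [Real.coe_toNNReal _ (by linarith)]
        gcongr
        exact meanSqOsc_log_le_one hc hcd
    _ = ε ^ 2 := mul_one _

lemma ae_optimizer_eq_neg_one_sub (hε : 1 / 2 < ε) :
    ∀ᵐ t, optimizer ε t = -optimizer ε (1 - t) := by
  filter_upwards [Measure.ae_ne volume (1 / 2)] with t ht
  have h := optimizer_one_sub hε (s := 1 - t) fun h => ht (by linarith)
  rwa [sub_sub_cancel] at h

lemma integral_comp_optimizer (hε : 1 / 2 < ε) (F : ℝ → ℝ) (c d : ℝ) :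
    ∫ t in c..d, F (optimizer ε t) = ∫ t in (1 - d)..(1 - c), F (-optimizer ε t) := by
  rw [← integral_comp_sub_left (fun t => F (-optimizer ε t)) 1]
  exact integral_congr_ae ((ae_optimizer_eq_neg_one_sub hε).mono fun t ht _ => by rw [ht])

lemma IntervalIntegrable.comp_optimizer_of_neg (hε : 1 / 2 < ε) {F : ℝ → ℝ} {c d : ℝ}
    (h : IntervalIntegrable (fun t => F (-optimizer ε t)) volume (1 - d) (1 - c)) :
    IntervalIntegrable (fun t => F (optimizer ε t)) volume c d := by
  have h' := h.comp_sub_left 1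
  rw [sub_sub_cancel, sub_sub_cancel] at h'
  exact h'.symm.congr_ae (ae_restrict_of_ae
    ((ae_optimizer_eq_neg_one_sub hε).mono fun t ht => by simp only [ht]))

lemma meanSqOsc_optimizer_right (hε : 1 / 2 < ε) {c d : ℝ} (hc : 1 / 2 ≤ c) (hcd : c < d)
    (hd : d ≤ 1) : meanSqOsc c d (optimizer ε) ≤ ε ^ 2 := by
  rw [meanSqOsc_congr_ae ((ae_optimizer_eq_neg_one_sub hε).mono fun t ht _ => ht),
    meanSqOsc_neg, meanSqOsc_comp_sub_left]
  exact meanSqOsc_optimizer_left hε (by linarith) (by linarith) (by linarith)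

lemma intervalIntegrable_comp_optimizer_zero_one (hε : 1 / 2 < ε) {F : ℝ → ℝ}
    (h : IntervalIntegrable (fun t => F (optimizer ε t)) volume 0 (1 / 2))
    (hneg : IntervalIntegrable (fun t => F (-optimizer ε t)) volume 0 (1 / 2)) :
    IntervalIntegrable (fun t => F (optimizer ε t)) volume 0 1 := by
  have hneg' : IntervalIntegrable (fun t => F (-optimizer ε t)) volume (1 - 1) (1 - 1 / 2) := by
    norm_num
    exact hneg
  exact h.trans (hneg'.comp_optimizer_of_neg hε)

lemma integral_optimizer (hε : 1 / 2 < ε) : ∫ t in 0..1, optimizer ε t = 0 := by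
  have h := integral_comp_optimizer hε id 0 1
  simp only [id, sub_self, sub_zero, intervalIntegral.integral_neg] at h
  linarith

lemma intervalIntegrable_optimizer (hε : 1 / 2 < ε) :
    IntervalIntegrable (optimizer ε) volume 0 1 :=
  intervalIntegrable_comp_optimizer_zero_one hε (F := id)
    (intervalIntegrable_optimizer_zero_half hε) (intervalIntegrable_optimizer_zero_half hε).neg

lemma intervalIntegrable_optimizer_sq (hε : 1 / 2 < ε) :
    IntervalIntegrable (fun t => optimizer ε t ^ 2) volume 0 1 :=
  intervalIntegrable_comp_optimizer_zero_one hε (F := fun x => x ^ 2)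
    (intervalIntegrable_optimizer_sq_zero_half hε)
    (by simpa only [neg_sq] using intervalIntegrable_optimizer_sq_zero_half hε)

lemma integral_comp_optimizer_of_even (hε : 1 / 2 < ε) {F : ℝ → ℝ} (hF : ∀ x, F (-x) = F x)
    (h : IntervalIntegrable (fun t => F (optimizer ε t)) volume 0 (1 / 2)) :
    ∫ t in 0..1, F (optimizer ε t) = 2 * ∫ t in 0..1 / 2, F (optimizer ε t) := by
  have hneg : IntervalIntegrable (fun t => F (-optimizer ε t)) volume 0 (1 / 2) := by
    simpa only [hF] using h
  rw [← integral_add_adjacent_intervals h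
      ((intervalIntegrable_comp_optimizer_zero_one hε h hneg).mono_set
        (uIcc_subset_uIcc (mem_uIcc_of_le (by norm_num) (by norm_num)) right_mem_uIcc)),
    integral_comp_optimizer hε F]
  norm_num [hF]
  ring

lemma integral_optimizer_sq_from_half_le (hε : 1 / 2 < ε) {d : ℝ} (hd : 1 / 2 ≤ d)
    (hd' : d ≤ 1) :
    ∫ t in 1 / 2..d, optimizer ε t ^ 2 ≤ ε ^ 2 * (d - 1 / 2) := by
  rw [integral_comp_optimizer hε (fun x => x ^ 2)]
  simp only [neg_sq]
  convert integral_optimizer_sq_le hε (c := 1 - d) (by linarith) (by linarith) using 2 <;> ring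

lemma meanSqOsc_optimizer_of_lt_half_lt (hε : 1 / 2 < ε) {c d : ℝ} (hc : 0 ≤ c)
    (hc' : c < 1 / 2) (hd' : 1 / 2 < d) (hd : d ≤ 1) : meanSqOsc c d (optimizer ε) ≤ ε ^ 2 := by
  have hcd : c < d := hc'.trans hd'
  have hsub : ∀ {u v : ℝ}, 0 ≤ u → u ≤ v → v ≤ 1 → uIcc u v ⊆ uIcc 0 1 := fun hu huv hv =>
    uIcc_subset_uIcc (mem_uIcc_of_le hu (huv.trans hv)) (mem_uIcc_of_le (hu.trans huv) hv)
  have hsq := intervalIntegrable_optimizer_sq hε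
  calc meanSqOsc c d (optimizer ε)
      ≤ intervalAvg c d (fun t => (optimizer ε t - 0) ^ 2) :=
        meanSqOsc_le_intervalAvg_sub_sq hcd.ne
          ((intervalIntegrable_optimizer hε).mono_set (hsub hc hcd.le hd))
          (hsq.mono_set (hsub hc hcd.le hd)) 0
    _ = (d - c)⁻¹ *
          ((∫ t in c..1 / 2, optimizer ε t ^ 2) + ∫ t in 1 / 2..d, optimizer ε t ^ 2) := by
        simp only [sub_zero]
        rw [intervalAvg, integral_add_adjacent_intervals
          (hsq.mono_set (hsub hc hc'.le (by norm_num)))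
          (hsq.mono_set (hsub (by norm_num) hd'.le hd))]
    _ ≤ (d - c)⁻¹ * (ε ^ 2 * (1 / 2 - c) + ε ^ 2 * (d - 1 / 2)) := by
        gcongr
        · exact integral_optimizer_sq_le hε hc hc'.le
        · exact integral_optimizer_sq_from_half_le hε hd'.le hd
    _ = ε ^ 2 := by
        field_simp [(sub_pos.2 hcd).ne']
        ring

lemma meanSqOsc_optimizer_le (hε : 1 / 2 < ε) {c d : ℝ} (hc : 0 ≤ c) (hcd : c < d)
    (hd : d ≤ 1) : meanSqOsc c d (optimizer ε) ≤ ε ^ 2 := by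
  rcases le_or_gt d (1 / 2) with hd' | hd'
  · exact meanSqOsc_optimizer_left hε hc hcd hd'
  rcases le_or_gt (1 / 2) c with hc' | hc'
  · exact meanSqOsc_optimizer_right hε hc' hcd hd
  · exact meanSqOsc_optimizer_of_lt_half_lt hε hc hc' hd' hd

end Optimizer

/-- The explicit optimizer at the point `(0, ε²)` for `ε ∈ (1/2, 1)`. -/
theorem optimizer_at_top_large_eps (ε : ℝ) (hε0 : 1 / 2 < ε) (hε1 : ε < 1)
    (φ : ℝ → ℝ)
    (hφ : ∀ t : ℝ, φ t =
      if t ≤ (2 * ε - 1) / (4 * ε) then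
        -ε * Real.log ((2 * ε - 1) / (4 * ε * t)) - 1 + ε
      else if t ≤ 1 / 2 then -1 + ε
      else if t ≤ (2 * ε + 1) / (4 * ε) then 1 - ε
      else ε * Real.log ((2 * ε - 1) / (4 * ε * (1 - t))) + 1 - ε) :
    MemBMO ε 0 1 φ ∧
      intervalAvg 0 1 φ = 0 ∧ intervalAvg 0 1 (fun t => (φ t) ^ 2) = ε ^ 2 ∧
      intervalAvg 0 1 (fun t => Real.exp |φ t|) = Real.exp (1 - ε) / (2 - 2 * ε) := by
  obtain rfl : φ = optimizer ε := funext hφ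
  refine ⟨⟨(intervalIntegrable_iff_integrableOn_Icc_of_le zero_le_one).1
      (intervalIntegrable_optimizer hε0),
    (intervalIntegrable_iff_integrableOn_Icc_of_le zero_le_one).1
      (intervalIntegrable_optimizer_sq hε0),
    fun c d hc hcd hd => meanSqOsc_optimizer_le hε0 hc hcd hd⟩, ?_, ?_, ?_⟩
  · rw [intervalAvg, integral_optimizer hε0, mul_zero]
  · rw [intervalAvg, integral_comp_optimizer_of_even hε0 (F := fun x => x ^ 2) neg_sq
      (intervalIntegrable_optimizer_sq_zero_half hε0), integral_optimizer_sq_zero_half hε0]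
    ring
  · rw [intervalAvg, integral_comp_optimizer_of_even hε0 (F := fun x => exp |x|)
      (fun x => by rw [abs_neg]) (intervalIntegrable_exp_abs_optimizer_zero_half hε0 hε1),
      integral_exp_abs_optimizer_zero_half hε0 hε1]
    field_simp
    ring
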